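/- arXiv:1406.6894 — 7 statements merged into one kernel-verified Lean document; each statement's English description precedes it below -/
import Mathlib

section
/- Let L/K be a finite Galois extension of local or global fields with nonabelian Galois group G, and let B be a G-stable fractional ideal of L. Then B is free over its associated order A_{K[G]} in the group algebra K[G] if and only if B is free over its associated order A_λ in the Hopf algebra H_λ giving the canonical nonclassical Hopf–Galois structure on L/K. -/
/-!
Both associated orders are associated orders of subalgebras of `End_K(L)`: `K[G]` acts faithfully
with image `𝒜`, and `L[G] ≃ End_K(L)` carries `H_λ` onto the centralizer `𝒜'` of `𝒜`, since an
element of `L[G]` is invariant under the twisted action iff it commutes with `G`.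

Let `B` be free over the associated order of a subalgebra `A` with generator `b`. As `B` is a full
lattice, `a ↦ a b` is a bijection `A ≃ L`, so every `y ∈ B` gives an endomorphism `a b ↦ a y` that
commutes with `A` and preserves `B`; hence `B` is free over the associated order of `A'` with the
same generator. For `A = 𝒜` this is one direction. Conversely, freeness over `𝒜'` makes `g ↦ g b`
injective on `𝒜''`, so `dim 𝒜'' ≤ [L:K] = |G| = dim 𝒜 ≤ dim 𝒜''`, i.e. `𝒜'' = 𝒜`.
-/

/- `L/K` is a finite Galois extension with Galois group `G = L ≃ₐ[K] L`.
The group algebra `K[G]` acts on `L` by `(∑ c_σ σ) • x = ∑ c_σ σ(x)`. -/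
noncomputable def kAct (K L : Type*) [Field K] [Field L] [Algebra K L]
    (z : MonoidAlgebra K (L ≃ₐ[K] L)) (x : L) : L :=
  z.coeff.sum fun σ c => c • σ x

/- `L[G]` acts `K`-linearly on `L` by `(∑ c_τ τ) · x = ∑ c_τ τ⁻¹(x)`. -/
noncomputable def lAct (K L : Type*) [Field K] [Field L] [Algebra K L]
    (z : MonoidAlgebra L (L ≃ₐ[K] L)) (x : L) : L :=
  z.coeff.sum fun τ c => c * τ⁻¹ x

/- The twisted action of `G` on `L[G]`: `σ ∗ (c τ) = σ(c) (στσ⁻¹)`. -/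
noncomputable def twist (K L : Type*) [Field K] [Field L] [Algebra K L]
    (σ : L ≃ₐ[K] L) (z : MonoidAlgebra L (L ≃ₐ[K] L)) :
    MonoidAlgebra L (L ≃ₐ[K] L) :=
  z.coeff.sum fun τ c => MonoidAlgebra.single (σ * τ * σ⁻¹) (σ c)

/- `H_λ = L[G]^G`, the Hopf algebra giving the canonical nonclassical
Hopf–Galois structure. -/
def Hlambda (K L : Type*) [Field K] [Field L] [Algebra K L] :
    Set (MonoidAlgebra L (L ≃ₐ[K] L)) :=
  {h | ∀ σ : L ≃ₐ[K] L, twist K L σ h = h}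

open Set Function

theorem Set.MapsTo.restrict_bijective_iff {α β : Type*} {f : α → β} {s : Set α} {t : Set β}
    (h : MapsTo f s t) : Bijective (h.restrict f s t) ↔ BijOn f s t :=
  ⟨fun hf => ⟨h, h.restrict_inj.mp hf.1, h.restrict_surjective_iff.mp hf.2⟩,
    fun hf => ⟨h.restrict_inj.mpr hf.2.1, h.restrict_surjective_iff.mpr hf.2.2⟩⟩

section AssociatedOrder

variable {K V : Type*} [Field K] [AddCommGroup V] [Module K V]

def associatedOrder (A : Subalgebra K (Module.End K V)) (B : Set V) : Set (Module.End K V) :=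
  {f | f ∈ A ∧ MapsTo f B B}

def IsFreeGenerator (A : Subalgebra K (Module.End K V)) (B : Set V) (b : V) : Prop :=
  BijOn (fun f : Module.End K V => f b) (associatedOrder A B) B

variable (K) in
structure IsFullLattice (B : Set V) : Prop where
  exists_smul_mem : ∀ x : V, ∃ c : K, c ≠ 0 ∧ c • x ∈ B
  exists_smul_mapsTo : ∀ f : Module.End K V, ∃ c : K, c ≠ 0 ∧ MapsTo (c • f) B B

variable {A : Subalgebra K (Module.End K V)} {B : Set V} {b : V}

theorem apply_comm_of_mem_centralizer {s : Set (Module.End K V)} {g f : Module.End K V}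
    (hg : g ∈ Subalgebra.centralizer K s) (hf : f ∈ s) (v : V) : g (f v) = f (g v) :=
  (LinearMap.congr_fun ((Subalgebra.mem_centralizer_iff K).mp hg f hf) v).symm

theorem one_mem_associatedOrder : 1 ∈ associatedOrder A B :=
  ⟨A.one_mem, mapsTo_id B⟩

theorem IsFreeGenerator.mem (h : IsFreeGenerator A B b) : b ∈ B :=
  h.mapsTo one_mem_associatedOrder

theorem IsFreeGenerator.ne_singleton_zero [Nontrivial V] (h : IsFreeGenerator A B b) :
    B ≠ {0} := by
  rintro rfl
  have hb : b = 0 := h.mem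
  exact zero_ne_one <|
    h.injOn ⟨A.zero_mem, fun _ _ => rfl⟩ one_mem_associatedOrder (by simp [hb])

theorem IsFullLattice.zero_mem (hB : IsFullLattice K B) : (0 : V) ∈ B := by
  obtain ⟨c, -, hc⟩ := hB.exists_smul_mem 0
  rwa [smul_zero] at hc

theorem zero_mem_associatedOrder (hB : IsFullLattice K B) : 0 ∈ associatedOrder A B :=
  ⟨A.zero_mem, fun _ _ => hB.zero_mem⟩

theorem IsFreeGenerator.bijective_apply (hB : IsFullLattice K B) (h : IsFreeGenerator A B b) :
    Bijective fun f : A => (f : Module.End K V) b := by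
  constructor
  · intro f g hfg
    obtain ⟨c, hc, hcB⟩ := hB.exists_smul_mapsTo (f - g)
    have hmem : c • ((f : Module.End K V) - g) ∈ associatedOrder A B :=
      ⟨A.smul_mem (A.sub_mem f.2 g.2) c, hcB⟩
    have hzero := h.injOn hmem (zero_mem_associatedOrder hB) <| by
      simp only [LinearMap.smul_apply, LinearMap.sub_apply, LinearMap.zero_apply]
      rw [show (f : Module.End K V) b = (g : Module.End K V) b from hfg, sub_self, smul_zero]
    exact Subtype.ext (sub_eq_zero.mp ((smul_eq_zero.mp hzero).resolve_left hc))
  · intro x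
    obtain ⟨c, hc, hcx⟩ := hB.exists_smul_mem x
    obtain ⟨f, ⟨hfA, -⟩, hfb⟩ := h.surjOn hcx
    refine ⟨⟨c⁻¹ • f, A.smul_mem hfA _⟩, ?_⟩
    simp only [LinearMap.smul_apply] at hfb ⊢
    rw [hfb, inv_smul_smul₀ hc]

theorem bijective_centralizer_apply (h : Bijective fun f : A => (f : Module.End K V) b) :
    Bijective fun g : Subalgebra.centralizer K (A : Set (Module.End K V)) =>
      (g : Module.End K V) b := by
  constructor
  · rintro ⟨g₁, hg₁⟩ ⟨g₂, hg₂⟩ (hg : g₁ b = g₂ b)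
    refine Subtype.ext (LinearMap.ext fun v => ?_)
    obtain ⟨⟨f, hf⟩, rfl⟩ := h.2 v
    rw [apply_comm_of_mem_centralizer hg₁ hf, apply_comm_of_mem_centralizer hg₂ hf, hg]
  · intro y
    -- `g` is `f b ↦ f y`, well defined because `f ↦ f b` is a bijection `A ≃ V`.
    let e := LinearEquiv.ofBijective (LinearMap.applyₗ b ∘ₗ A.val.toLinearMap) h
    let g := (LinearMap.applyₗ y ∘ₗ A.val.toLinearMap) ∘ₗ e.symm.toLinearMap
    have hg : ∀ f ∈ A, g (f b) = f y := fun f hf => by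
      change ((e.symm (e ⟨f, hf⟩) : A) : Module.End K V) y = f y
      rw [e.symm_apply_apply]
    refine ⟨⟨g, (Subalgebra.mem_centralizer_iff K).mpr fun f hf =>
      LinearMap.ext fun v => ?_⟩, ?_⟩
    · obtain ⟨⟨f', hf'⟩, rfl⟩ := h.2 v
      change f (g (f' b)) = g ((f * f') b)
      rw [hg f' hf', hg _ (A.mul_mem hf hf')]
      rfl
    · simpa using hg 1 A.one_mem

theorem IsFreeGenerator.centralizer (hB : IsFullLattice K B) (h : IsFreeGenerator A B b) :
    IsFreeGenerator (Subalgebra.centralizer K (A : Set (Module.End K V))) B b := by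
  have hbij := bijective_centralizer_apply (h.bijective_apply hB)
  refine ⟨fun g hg => hg.2 h.mem, fun g₁ hg₁ g₂ hg₂ hg => ?_, fun y hy => ?_⟩
  · exact congrArg Subtype.val (hbij.1 (a₁ := ⟨g₁, hg₁.1⟩) (a₂ := ⟨g₂, hg₂.1⟩) hg)
  · obtain ⟨⟨g, hg⟩, rfl⟩ := hbij.2 y
    refine ⟨g, ⟨hg, fun x hx => ?_⟩, rfl⟩
    obtain ⟨f, ⟨hfA, hfB⟩, rfl⟩ := h.surjOn hx
    rw [apply_comm_of_mem_centralizer hg hfA]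
    exact hfB hy

theorem IsFreeGenerator.of_centralizer [FiniteDimensional K V] (hB : IsFullLattice K B)
    (hA : Module.finrank K A = Module.finrank K V)
    (h : IsFreeGenerator (Subalgebra.centralizer K (A : Set (Module.End K V))) B b) :
    IsFreeGenerator A B b := by
  have hbij := bijective_centralizer_apply (h.bijective_apply hB)
  have hcc : A = Subalgebra.centralizer K
      (Subalgebra.centralizer K (A : Set (Module.End K V)) : Set (Module.End K V)) := by
    refine Subalgebra.eq_of_le_of_finrank_le (Subalgebra.le_centralizer_centralizer K) ?_
    rw [hA]
    exact (LinearEquiv.ofBijective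
      (LinearMap.applyₗ b ∘ₗ (Subalgebra.val _).toLinearMap) hbij).finrank_eq.le
  rw [hcc]
  exact h.centralizer hB

theorem exists_bijective_iff_exists_isFreeGenerator {X : Type*} {q : X → Prop}
    {act : X → V → V} {ρ : X → Module.End K V} (hρ : Injective ρ)
    (hρA : (A : Set (Module.End K V)) ⊆ range ρ) (hact : ∀ x, ⇑(ρ x) = act x)
    (hq : ∀ x, q x ↔ ρ x ∈ A ∧ MapsTo (ρ x) B B) (hqB : ∀ x, q x → MapsTo (act x) B B) :
    (∃ b, ∃ hb : b ∈ B, Bijective fun x : {x // q x} => (⟨act x b, hqB x x.2 hb⟩ : B)) ↔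
      ∃ b, IsFreeGenerator A B b := by
  have himage : ρ '' {x | q x} = associatedOrder A B := by
    ext f
    constructor
    · rintro ⟨x, hx, rfl⟩
      exact (hq x).mp hx
    · rintro ⟨hfA, hfB⟩
      obtain ⟨x, rfl⟩ := hρA hfA
      exact ⟨x, (hq x).mpr ⟨hfA, hfB⟩, rfl⟩
  have key : ∀ b (hb : b ∈ B),
      (Bijective fun x : {x // q x} => (⟨act x b, hqB x x.2 hb⟩ : B)) ↔
        IsFreeGenerator A B b := by
    intro b hb
    have hmaps : MapsTo (fun x => ρ x b) {x | q x} B := fun x hx => by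
      simpa only [hact] using hqB x hx hb
    have hrestrict : (fun x : {x // q x} => (⟨act x b, hqB x x.2 hb⟩ : B)) = hmaps.restrict :=
      funext fun x => Subtype.ext (congrFun (hact x) b).symm
    unfold IsFreeGenerator
    rw [hrestrict, hmaps.restrict_bijective_iff, ← himage, ← bijOn_comp_iff hρ.injOn]
    rfl
  exact ⟨fun ⟨b, hb, h⟩ => ⟨b, (key b hb).mp h⟩,
    fun ⟨b, h⟩ => ⟨b, h.mem, (key b h.mem).mpr h⟩⟩

end AssociatedOrder

section GaloisAction

variable (K L : Type*) [Field K] [Field L] [Algebra K L]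

noncomputable def kActHom : MonoidAlgebra K (L ≃ₐ[K] L) →ₐ[K] Module.End K L :=
  MonoidAlgebra.lift K (Module.End K L) (L ≃ₐ[K] L) (AlgEquiv.toLinearMapHom K L)

noncomputable def lActHom : MonoidAlgebra L (L ≃ₐ[K] L) →ₗ[L] Module.End K L :=
  (MonoidAlgebra.basis (L ≃ₐ[K] L) L).constr L fun τ => (τ⁻¹ : L ≃ₐ[K] L).toLinearMap

variable {K L}

theorem kActHom_apply (z : MonoidAlgebra K (L ≃ₐ[K] L)) (x : L) :
    kActHom K L z x = kAct K L z x := by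
  rw [kActHom, MonoidAlgebra.lift_apply, kAct, LinearMap.finsupp_sum_apply]
  rfl

theorem lActHom_apply (z : MonoidAlgebra L (L ≃ₐ[K] L)) (x : L) :
    lActHom K L z x = lAct K L z x := by
  rw [lActHom, Module.Basis.constr_apply, lAct, LinearMap.finsupp_sum_apply]
  rfl

theorem kActHom_injective : Injective (kActHom K L) := by
  refine LinearMap.injective_of_linearIndependent (f := (kActHom K L).toLinearMap)
    (MonoidAlgebra.basis (L ≃ₐ[K] L) K).span_eq ?_
  have : (kActHom K L).toLinearMap ∘ MonoidAlgebra.basis (L ≃ₐ[K] L) K =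
      AlgHom.toLinearMap ∘ AlgEquiv.toAlgHom := by
    ext σ x
    simp [kActHom]
  rw [this]
  exact (linearIndependent_algHom_toLinearMap' K L L).comp _ AlgEquiv.coe_toAlgHom_injective

theorem lActHom_injective : Injective (lActHom K L) := by
  refine LinearMap.injective_of_linearIndependent
    (MonoidAlgebra.basis (L ≃ₐ[K] L) L).span_eq ?_
  have : lActHom K L ∘ MonoidAlgebra.basis (L ≃ₐ[K] L) L =
      AlgHom.toLinearMap ∘ fun τ : L ≃ₐ[K] L => (τ⁻¹ : L ≃ₐ[K] L).toAlgHom := by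
    ext τ x
    simp only [Function.comp_apply, lActHom, Module.Basis.constr_basis]
    rfl
  rw [this]
  exact (linearIndependent_algHom_toLinearMap K L L).comp _
    (AlgEquiv.coe_toAlgHom_injective.comp inv_injective)

theorem lActHom_single (τ : L ≃ₐ[K] L) (c : L) :
    lActHom K L (MonoidAlgebra.single τ c) = c • (τ⁻¹ : L ≃ₐ[K] L).toLinearMap := by
  rw [← mul_one c, ← MonoidAlgebra.smul_single', map_smul, ← MonoidAlgebra.basis_apply, lActHom,
    Module.Basis.constr_basis, mul_one]

theorem lActHom_twist_apply (σ : L ≃ₐ[K] L) (z : MonoidAlgebra L (L ≃ₐ[K] L)) (x : L) :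
    lActHom K L (twist K L σ z) x = σ (lActHom K L z (σ⁻¹ x)) := by
  rw [twist, map_finsuppSum, LinearMap.finsupp_sum_apply, lActHom_apply, lAct, map_finsuppSum]
  refine Finsupp.sum_congr fun τ _ => ?_
  simp [lActHom_single]

theorem mem_centralizer_range_kActHom_iff (f : Module.End K L) :
    f ∈ Subalgebra.centralizer K ((kActHom K L).range : Set (Module.End K L)) ↔
      ∀ σ : L ≃ₐ[K] L, ∀ x, σ (f x) = f (σ x) := by
  rw [Subalgebra.mem_centralizer_iff]
  constructor
  · intro hf σ x
    simpa [kActHom] using LinearMap.congr_fun (hf _ ⟨MonoidAlgebra.single σ 1, rfl⟩) x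
  · rintro hf _ ⟨z, rfl⟩
    induction z using MonoidAlgebra.induction_linear with
    | zero => simp
    | add z w hz hw => simp only [map_add, add_mul, mul_add, hz, hw]
    | single σ c => ext x; simp [kActHom, hf]

theorem mem_Hlambda_iff_lActHom_mem_centralizer (h : MonoidAlgebra L (L ≃ₐ[K] L)) :
    h ∈ Hlambda K L ↔
      lActHom K L h ∈ Subalgebra.centralizer K ((kActHom K L).range : Set (Module.End K L)) := by
  rw [mem_centralizer_range_kActHom_iff]
  refine forall_congr' fun σ => ?_
  rw [← lActHom_injective.eq_iff, LinearMap.ext_iff]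
  simp only [lActHom_twist_apply]
  exact ⟨fun H x => by simpa using H (σ x), fun H x => by simp [H]⟩

theorem exists_bijective_kAct_iff {B : Set L} :
    (∃ b, ∃ hb : b ∈ B, Bijective
        (fun z : {z : MonoidAlgebra K (L ≃ₐ[K] L) // ∀ y ∈ B, kAct K L z y ∈ B} =>
          (⟨kAct K L z.1 b, z.2 b hb⟩ : B))) ↔
      ∃ b, IsFreeGenerator (kActHom K L).range B b :=
  exists_bijective_iff_exists_isFreeGenerator (A := (kActHom K L).range) kActHom_injective
    (fun _ ⟨z, hz⟩ => ⟨z, hz⟩)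
    (fun z => funext (kActHom_apply z)) (fun z => by simp [MapsTo, kActHom_apply])
    (fun _ hz => hz)

end GaloisAction

section Galois

variable {K L : Type*} [Field K] [Field L] [Algebra K L] [FiniteDimensional K L] [IsGalois K L]

theorem finrank_range_kActHom :
    Module.finrank K (kActHom K L).range = Module.finrank K L := by
  rw [← (AlgEquiv.ofInjective _ kActHom_injective).toLinearEquiv.finrank_eq,
    Module.finrank_eq_card_basis (MonoidAlgebra.basis (L ≃ₐ[K] L) K),
    ← Nat.card_eq_fintype_card, IsGalois.card_aut_eq_finrank]

theorem lActHom_surjective : Surjective (lActHom K L) := by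
  have : Module.Finite L (MonoidAlgebra L (L ≃ₐ[K] L)) :=
    Module.Finite.of_basis (MonoidAlgebra.basis _ L)
  have : Module.Finite K (MonoidAlgebra L (L ≃ₐ[K] L)) := Module.Finite.trans L _
  have hrank : Module.finrank K (MonoidAlgebra L (L ≃ₐ[K] L)) =
      Module.finrank K (Module.End K L) := by
    rw [Module.finrank_linearMap, ← Module.finrank_mul_finrank K L,
      Module.finrank_eq_card_basis (MonoidAlgebra.basis _ L), ← Nat.card_eq_fintype_card,
      IsGalois.card_aut_eq_finrank]
  exact (LinearMap.injective_iff_surjective_of_finrank_eq_finrank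
    (f := (lActHom K L).restrictScalars K) hrank).mp lActHom_injective

theorem exists_bijective_lAct_iff {B : Set L} :
    (∃ b, ∃ hb : b ∈ B, Bijective
        (fun h : {h : MonoidAlgebra L (L ≃ₐ[K] L) //
            h ∈ Hlambda K L ∧ ∀ y ∈ B, lAct K L h y ∈ B} =>
          (⟨lAct K L h.1 b, h.2.2 b hb⟩ : B))) ↔
      ∃ b, IsFreeGenerator
        (Subalgebra.centralizer K ((kActHom K L).range : Set (Module.End K L))) B b :=
  exists_bijective_iff_exists_isFreeGenerator (ρ := lActHom K L) lActHom_injective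
    (fun f _ => lActHom_surjective f) (fun h => funext (lActHom_apply h))
    (fun h => (mem_Hlambda_iff_lActHom_mem_centralizer h).and
      (by simp [MapsTo, lActHom_apply]))
    (fun _ hh => hh.2)

end Galois

section FractionalIdeal

variable {K L R : Type*} [Field K] [Field L] [Algebra K L]
  [CommRing R] [IsDomain R] [Algebra R K] [IsFractionRing R K]
  [Algebra R L] [IsScalarTower R K L] [FiniteDimensional K L]
  {B : Submodule (integralClosure R L) L}

include K in
theorem exists_smul_mem_of_ne_bot (hB : B ≠ ⊥) (x : L) : ∃ r : R, r ≠ 0 ∧ r • x ∈ B := by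
  obtain ⟨b, hb, hb0⟩ := Submodule.exists_mem_ne_zero_of_ne_bot hB
  have : IsAlgebraic R (x * b⁻¹) :=
    (IsFractionRing.isAlgebraic_iff R K L).mpr (Algebra.IsAlgebraic.isAlgebraic _)
  obtain ⟨r, hr0, hint⟩ := this.exists_integral_multiple
  refine ⟨r, hr0, ?_⟩
  let o : integralClosure R L := ⟨r • (x * b⁻¹), (mem_integralClosure_iff R L).mpr hint⟩
  have hx : r • x = o • b := by
    rw [Subalgebra.smul_def, smul_eq_mul, smul_mul_assoc, inv_mul_cancel_right₀ hb0]
  rw [hx]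
  exact B.smul_mem _ hb

include K in
theorem exists_smul_mem_of_fg (hB : B ≠ ⊥) {N : Submodule R L} (hN : N.FG) :
    ∃ r : R, r ≠ 0 ∧ ∀ y ∈ N, r • y ∈ B := by
  classical
  obtain ⟨s, rfl⟩ := hN
  choose r hr0 hrB using exists_smul_mem_of_ne_bot (K := K) hB
  refine ⟨∏ x ∈ s, r x, Finset.prod_ne_zero_iff.mpr fun x _ => hr0 x, fun y hy => ?_⟩
  have hspan : Submodule.span R (s : Set L) ≤
      (B.restrictScalars R).comap (LinearMap.lsmul R L (∏ x ∈ s, r x)) := by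
    refine Submodule.span_le.mpr fun x hx => ?_
    change (∏ x ∈ s, r x) • x ∈ B
    rw [← Finset.mul_prod_erase s r hx, mul_comm, mul_smul]
    exact B.smul_of_tower_mem _ (hrB x)
  exact hspan hy

theorem fg_restrictScalars_of_isFractional [IsIntegrallyClosed R] [IsNoetherianRing R]
    [Algebra.IsSeparable K L]
    (hfrac : ∃ d : integralClosure R L, d ≠ 0 ∧ ∀ b ∈ B, (d : L) * b ∈ integralClosure R L) :
    (B.restrictScalars R).FG := by
  obtain ⟨d, hd0, hd⟩ := hfrac
  have : IsNoetherian R (Subalgebra.toSubmodule (integralClosure R L)) :=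
    IsIntegralClosure.isNoetherian R K L (integralClosure R L)
  refine Submodule.fg_of_fg_map_injective (LinearMap.mulLeft R (d : L))
    (mul_right_injective₀ (Subtype.coe_ne_coe.mpr hd0)) (isNoetherian_submodule.mp this _ ?_)
  rintro _ ⟨b, hb, rfl⟩
  exact hd b hb

theorem isFullLattice_of_isFractional [IsIntegrallyClosed R] [IsNoetherianRing R]
    [Algebra.IsSeparable K L] (hB : B ≠ ⊥)
    (hfrac : ∃ d : integralClosure R L, d ≠ 0 ∧ ∀ b ∈ B, (d : L) * b ∈ integralClosure R L) :
    IsFullLattice K (B : Set L) := by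
  have hK : ∀ r : R, r ≠ 0 → algebraMap R K r ≠ 0 := fun r hr =>
    (map_ne_zero_iff _ (IsFractionRing.injective R K)).mpr hr
  refine ⟨fun x => ?_, fun f => ?_⟩
  · obtain ⟨r, hr0, hr⟩ := exists_smul_mem_of_ne_bot (K := K) hB x
    exact ⟨algebraMap R K r, hK r hr0, by rwa [algebraMap_smul]⟩
  · obtain ⟨r, hr0, hr⟩ := exists_smul_mem_of_fg (K := K) hB
      ((fg_restrictScalars_of_isFractional (K := K) hfrac).map (f.restrictScalars R))
    refine ⟨algebraMap R K r, hK r hr0, fun y hy => ?_⟩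
    rw [LinearMap.smul_apply, algebraMap_smul]
    exact hr _ ⟨y, hy, rfl⟩

end FractionalIdeal

section

/- `O_K` is modelled by a Dedekind domain `R` with fraction field `K` (this covers the
ring of integers of a local or a global field, in any characteristic), and `O_L` is the
integral closure of `R` in `L`. -/
variable (K L R : Type*) [Field K] [Field L] [Algebra K L]
  [CommRing R] [IsDedekindDomain R] [Algebra R K] [IsFractionRing R K]
  [Algebra R L] [IsScalarTower R K L]

theorem free_over_AKG_iff_free_over_Alambda
    [FiniteDimensional K L] [IsGalois K L]
    (B : Submodule (integralClosure R L) L)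
    (hfrac : ∃ d : integralClosure R L, d ≠ 0 ∧
      ∀ b ∈ B, (d : L) * b ∈ integralClosure R L) :
    (∃ b, ∃ hb : b ∈ B, Function.Bijective
        (fun z : {z : MonoidAlgebra K (L ≃ₐ[K] L) // ∀ y ∈ B, kAct K L z y ∈ B} =>
          (⟨kAct K L z.1 b, z.2 b hb⟩ : B))) ↔
      (∃ b, ∃ hb : b ∈ B, Function.Bijective
        (fun h : {h : MonoidAlgebra L (L ≃ₐ[K] L) //
            h ∈ Hlambda K L ∧ ∀ y ∈ B, lAct K L h y ∈ B} =>
          (⟨lAct K L h.1 b, h.2.2 b hb⟩ : B))) := by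
  refine (exists_bijective_kAct_iff (B := (B : Set L))).trans
    (Iff.trans ?_ (exists_bijective_lAct_iff (B := (B : Set L))).symm)
  have hlat {A : Subalgebra K (Module.End K L)} {b : L}
      (h : IsFreeGenerator A (B : Set L) b) : IsFullLattice K (B : Set L) :=
    isFullLattice_of_isFractional (by rintro rfl; exact h.ne_singleton_zero Submodule.bot_coe)
      hfrac
  exact ⟨fun ⟨b, h⟩ => ⟨b, h.centralizer (hlat h)⟩,
    fun ⟨b, h⟩ => ⟨b, h.of_centralizer (hlat h) finrank_range_kActHom⟩⟩

end
end

section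
/- Let L/K be a finite Galois extension of fields with Galois group G and let x ∈ L. Then x generates L as a K[G]-module (i.e. {z•x : z ∈ K[G]} = L, equivalently {σ(x) : σ ∈ G} is a K-basis of L) if and only if x generates L as an H_λ-module (i.e. {h·x : h ∈ H_λ} = L). -/
/-! Write `Φ : L[G] → End_K(L)` for the action `h ↦ (y ↦ h · y)`. By Dedekind's independence of
characters and a dimension count, `Φ` is bijective, and `h` is fixed by the twisted action exactly
when `Φ h` commutes with `G`. Hence `H_λ · x = {f x | f ∈ End_{K[G]}(L)}`, while `K[G] • x` is the
`K`-span of the orbit `G x`. If `G x` is a basis, every `y` is `f x` for the `G`-equivariant `f`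
with `f (σ x) = σ y`. Conversely, if a normal basis generator `x₀` is `f x` with `f` equivariant,
then `f` maps the span of `G x` onto the span of `G x₀`, which is `L`, so `G x` spans `L`. -/

open Module

namespace HopfGalois

variable (K L : Type*) [Field K] [Field L] [Algebra K L]

noncomputable def lActHom : MonoidAlgebra L Gal(L/K) →ₗ[L] L →ₗ[K] L :=
  Finsupp.linearCombination L (fun τ : Gal(L/K) => (τ⁻¹).toLinearMap) ∘ₗ
    (MonoidAlgebra.coeffLinearEquiv L).toLinearMap

variable {L} in
def GaloisEquivariant (f : L → L) : Prop :=
  ∀ (σ : Gal(L/K)) (y : L), f (σ y) = σ (f y)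

variable {K L}

theorem lActHom_apply (z : MonoidAlgebra L Gal(L/K)) (y : L) :
    lActHom K L z y = lAct K L z y := by
  simp [lActHom, lAct, Finsupp.linearCombination_apply, LinearMap.finsupp_sum_apply]

theorem lActHom_injective : Function.Injective (lActHom K L) := by
  have hli : LinearIndependent L fun τ : Gal(L/K) => (τ⁻¹).toLinearMap :=
    (linearIndependent_toLinearMap K L L).comp (fun τ : Gal(L/K) => (τ⁻¹ : Gal(L/K)).toAlgHom)
      fun τ ρ h => inv_injective (AlgEquiv.coe_toAlgHom_injective h)
  exact (linearIndependent_iff_injective_finsuppLinearCombination.mp hli).comp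
    (MonoidAlgebra.coeffLinearEquiv L).injective

theorem lActHom_surjective [FiniteDimensional K L] [IsGalois K L] :
    Function.Surjective (lActHom K L) := by
  refine (LinearMap.injective_iff_surjective_of_finrank_eq_finrank ?_).mp lActHom_injective
  rw [(MonoidAlgebra.coeffLinearEquiv L).finrank_eq, finrank_finsupp_self,
    finrank_linearMap_self, ← Nat.card_eq_fintype_card, IsGalois.card_aut_eq_finrank]

theorem lAct_twist_apply (σ : Gal(L/K)) (h : MonoidAlgebra L Gal(L/K)) (y : L) :
    lAct K L (twist K L σ h) (σ y) = σ (lAct K L h y) := by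
  rw [← lActHom_apply, twist, map_finsuppSum, LinearMap.finsupp_sum_apply, lAct, map_finsuppSum]
  refine Finsupp.sum_congr fun τ _ => ?_
  simp [lActHom, map_mul]

theorem mem_Hlambda_iff (h : MonoidAlgebra L Gal(L/K)) :
    h ∈ Hlambda K L ↔ GaloisEquivariant K (lAct K L h) := by
  refine ⟨fun hh σ y => by
    simpa only [hh σ] using lAct_twist_apply σ h y, fun hcomm σ => lActHom_injective ?_⟩
  ext y
  obtain ⟨y, rfl⟩ := σ.surjective y
  rw [lActHom_apply, lActHom_apply, lAct_twist_apply, hcomm]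

theorem exists_mem_Hlambda_lAct_eq [FiniteDimensional K L] [IsGalois K L] (f : L →ₗ[K] L)
    (hf : GaloisEquivariant K f) :
    ∃ h ∈ Hlambda K L, lAct K L h = f := by
  obtain ⟨h, rfl⟩ := lActHom_surjective f
  have hlAct : lAct K L h = lActHom K L h := funext fun y => (lActHom_apply h y).symm
  exact ⟨h, (mem_Hlambda_iff h).mpr (hlAct ▸ hf), hlAct⟩

theorem range_lAct_Hlambda [FiniteDimensional K L] [IsGalois K L] (x : L) :
    (Set.range fun h : Hlambda K L => lAct K L h.1 x) =
      {y | ∃ f : L →ₗ[K] L, GaloisEquivariant K f ∧ f x = y} := by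
  ext y
  constructor
  · rintro ⟨⟨h, hh⟩, rfl⟩
    refine ⟨lActHom K L h, fun σ y => ?_, lActHom_apply h x⟩
    simpa only [lActHom_apply] using (mem_Hlambda_iff h).mp hh σ y
  · rintro ⟨f, hf, rfl⟩
    obtain ⟨h, hh, hf'⟩ := exists_mem_Hlambda_lAct_eq f hf
    exact ⟨⟨h, hh⟩, congrFun hf' x⟩

theorem range_kAct (x : L) :
    (Set.range fun z : MonoidAlgebra K Gal(L/K) => kAct K L z x) =
      Submodule.span K (Set.range fun σ : Gal(L/K) => σ x) := by
  rw [← Finsupp.range_linearCombination, LinearMap.coe_range,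
    ← (MonoidAlgebra.coeffLinearEquiv K).surjective.range_comp]
  rfl

theorem exists_equivariant_apply_eq [FiniteDimensional K L] [IsGalois K L] {x : L}
    (hx : Submodule.span K (Set.range fun σ : Gal(L/K) => σ x) = ⊤) (y : L) :
    ∃ f : L →ₗ[K] L, GaloisEquivariant K f ∧ f x = y := by
  have hcard : Fintype.card Gal(L/K) = finrank K L := by
    rw [← Nat.card_eq_fintype_card, IsGalois.card_aut_eq_finrank]
  let B := basisOfTopLeSpanOfCardEqFinrank _ hx.ge hcard
  have hB : ∀ τ, B τ = τ x := fun τ => by simp [B]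
  let f : L →ₗ[K] L := B.constr K fun τ => τ y
  refine ⟨f, fun σ => LinearMap.congr_fun (?_ : f ∘ₗ σ.toLinearMap = σ.toLinearMap ∘ₗ f),
    by simpa [f, hB] using B.constr_basis K (fun τ : Gal(L/K) => τ y) 1⟩
  refine B.ext fun τ => ?_
  have hστ : σ (B τ) = B (σ * τ) := by rw [hB, hB]; rfl
  simp only [f, LinearMap.comp_apply, AlgEquiv.toLinearMap_apply, hστ, Basis.constr_basis]
  rfl

theorem span_orbit_eq_top_of_equivariant [FiniteDimensional K L] {x : L} (f : L →ₗ[K] L)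
    (hf : GaloisEquivariant K f)
    (hfx : Submodule.span K (Set.range fun σ : Gal(L/K) => σ (f x)) = ⊤) :
    Submodule.span K (Set.range fun σ : Gal(L/K) => σ x) = ⊤ := by
  have hmap : (Submodule.span K (Set.range fun σ : Gal(L/K) => σ x)).map f = ⊤ := by
    rw [Submodule.map_span, ← Set.range_comp]
    simpa only [Function.comp_def, hf _ x] using hfx
  refine Submodule.eq_top_of_finrank_eq (le_antisymm (Submodule.finrank_le _) ?_)
  calc finrank K L = finrank K (⊤ : Submodule K L) := finrank_top K L |>.symm
    _ ≤ _ := hmap ▸ Submodule.finrank_map_le f _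

end HopfGalois

/-- `x` generates `L` as a `K[G]`-module iff `x` generates `L`
as an `H_λ`-module. -/
theorem normal_basis_generator_iff_Hlambda_generator
    (K L : Type*) [Field K] [Field L] [Algebra K L]
    [FiniteDimensional K L] [IsGalois K L] (x : L) :
    (Set.range fun z : MonoidAlgebra K (L ≃ₐ[K] L) => kAct K L z x) = Set.univ ↔
      (Set.range fun h : Hlambda K L => lAct K L h.1 x) = Set.univ := by
  rw [HopfGalois.range_kAct, Submodule.coe_eq_univ, HopfGalois.range_lAct_Hlambda,
    Set.eq_univ_iff_forall]
  refine ⟨HopfGalois.exists_equivariant_apply_eq, fun hx => ?_⟩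
  obtain ⟨f, hf, hfx⟩ := hx (IsGalois.normalBasis K L 1)
  refine HopfGalois.span_orbit_eq_top_of_equivariant f hf ?_
  simpa only [hfx, ← IsGalois.normalBasis_apply] using (IsGalois.normalBasis K L).span_eq
end

section
/- For x ∈ L, the element f_x = ∑_{g∈G} g(x) u_g generates (GL)^G as a module over L[N]^G (i.e. the K-span of {h·f_x : h ∈ L[N]^G} equals (GL)^G) if and only if f_x generates GL as a module over L[N] (i.e. the L-span of {η·f_x : η ∈ N} equals GL). -/
open scoped Classical

/- `L/K` is a finite Galois extension with Galois group `G = L ≃ₐ[K] L`, and `N` is a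
subgroup of `Perm G`.  `GL = Map(G, L)` is identified with `G → L` (the idempotent `u_g`
being the indicator function of `g`), and `N` acts on `GL` by `η · u_g = u_{η(g)}`, so
that the group algebra `L[N]` acts on `GL` by
`(∑ c_η η) · f = ∑ c_η (g ↦ f (η⁻¹ g))`. -/
noncomputable def lNAct (K L : Type*) [Field K] [Field L] [Algebra K L]
    (N : Subgroup (Equiv.Perm (L ≃ₐ[K] L)))
    (z : MonoidAlgebra L N) (f : (L ≃ₐ[K] L) → L) : (L ≃ₐ[K] L) → L :=
  z.coeff.sum fun η c => c • fun g => f ((η : Equiv.Perm (L ≃ₐ[K] L))⁻¹ g)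

/- Assuming `N` is normalized by the image `λ(G)` of the left regular embedding
(`λ(σ) = Equiv.mulLeft σ`), `G` acts on `L[N]` by `σ ∗ (c η) = σ(c) (λ(σ) η λ(σ)⁻¹)`. -/
noncomputable def twistN (K L : Type*) [Field K] [Field L] [Algebra K L]
    (N : Subgroup (Equiv.Perm (L ≃ₐ[K] L)))
    (hnorm : ∀ (σ : L ≃ₐ[K] L), ∀ η ∈ N,
      Equiv.mulLeft σ * η * (Equiv.mulLeft σ)⁻¹ ∈ N)
    (σ : L ≃ₐ[K] L) (z : MonoidAlgebra L N) : MonoidAlgebra L N :=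
  z.coeff.sum fun η c =>
    MonoidAlgebra.single ⟨Equiv.mulLeft σ * (η : Equiv.Perm (L ≃ₐ[K] L)) *
      (Equiv.mulLeft σ)⁻¹, hnorm σ η η.2⟩ (σ c)

/- `L[N]^G`, the fixed points of `L[N]` under the twisted `G`-action. -/
def LNfixed (K L : Type*) [Field K] [Field L] [Algebra K L]
    (N : Subgroup (Equiv.Perm (L ≃ₐ[K] L)))
    (hnorm : ∀ (σ : L ≃ₐ[K] L), ∀ η ∈ N,
      Equiv.mulLeft σ * η * (Equiv.mulLeft σ)⁻¹ ∈ N) :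
    Set (MonoidAlgebra L N) :=
  {z | ∀ σ : L ≃ₐ[K] L, twistN K L N hnorm σ z = z}

/- `(GL)^G`, the fixed points of `GL = Map(G, L)` under the `G`-action
`σ ∗ (c u_g) = σ(c) u_{σ g}`, i.e. `(σ ∗ f)(g) = σ (f (σ⁻¹ g))`. -/
def GLfixed (K L : Type*) [Field K] [Field L] [Algebra K L] :
    Set ((L ≃ₐ[K] L) → L) :=
  {f | ∀ σ : L ≃ₐ[K] L, (fun g => σ (f (σ⁻¹ * g))) = f}

/- For `x ∈ L`, the element `f_x = ∑_{g ∈ G} g(x) u_g` of `GL`. -/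
noncomputable def fEl (K L : Type*) [Field K] [Field L] [Algebra K L] (x : L) :
    (L ≃ₐ[K] L) → L :=
  fun g => g x

/-!
By Dedekind's independence of characters the vectors `f_y` (`y ∈ L`) span `GL` over `L`; they
all lie in `(GL)^G`, so a generator of `(GL)^G` over `L[N]^G` generates `GL` over `L[N]`.
Conversely, `z ↦ z · f_x` is a `G`-equivariant `L`-linear map `L[N] → GL`, and regularity of
`N` gives `|N| = |G|`, so both sides have the same dimension. If `f_x` generates `GL`, this map
is therefore bijective, and an equivariant bijection carries `L[N]^G` onto `(GL)^G`.
-/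

section GaloisDescent

variable (K L : Type*) [Field K] [Field L] [Algebra K L]

theorem fEl_mem_GLfixed (x : L) : fEl K L x ∈ GLfixed K L := by
  intro σ
  funext g
  exact congrArg (· x) (mul_inv_cancel_left σ g)

theorem span_range_fEl [FiniteDimensional K L] :
    Submodule.span L (Set.range (fEl K L)) = ⊤ :=
  span_flip_eq_top_iff_linearIndependent.mpr <|
    (linearIndependent_monoidHom L L).comp (fun σ : L ≃ₐ[K] L => (σ : L →* L))
      fun _ _ h => AlgEquiv.ext (DFunLike.congr_fun h :)

def glFixedSubmodule : Submodule K ((L ≃ₐ[K] L) → L) where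
  carrier := GLfixed K L
  add_mem' {f f'} hf hf' σ := by
    funext g
    simp only [Pi.add_apply, map_add, congrFun (hf σ) g, congrFun (hf' σ) g]
  zero_mem' σ := by
    funext g
    simp
  smul_mem' c f hf σ := by
    funext g
    simp only [Pi.smul_apply, Algebra.smul_def, map_mul, AlgEquiv.commutes, congrFun (hf σ) g]

end GaloisDescent

section GroupAlgebraAction

variable (K L : Type*) [Field K] [Field L] [Algebra K L] (N : Subgroup (Equiv.Perm (L ≃ₐ[K] L)))
  (hnorm : ∀ (σ : L ≃ₐ[K] L), ∀ η ∈ N,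
    Equiv.mulLeft σ * η * (Equiv.mulLeft σ)⁻¹ ∈ N)

noncomputable def lNActLinearMap (f : (L ≃ₐ[K] L) → L) :
    MonoidAlgebra L N →ₗ[L] (L ≃ₐ[K] L) → L :=
  Finsupp.linearCombination L (fun (η : N) g => f ((η : Equiv.Perm (L ≃ₐ[K] L))⁻¹ g))
    ∘ₗ (MonoidAlgebra.coeffLinearEquiv L).toLinearMap

theorem lNActLinearMap_apply (f : (L ≃ₐ[K] L) → L) (z : MonoidAlgebra L N) :
    lNActLinearMap K L N f z = lNAct K L N z f :=
  Finsupp.linearCombination_apply L _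

theorem range_lNActLinearMap (f : (L ≃ₐ[K] L) → L) :
    LinearMap.range (lNActLinearMap K L N f) = Submodule.span L
      (Set.range fun (η : N) g => f ((η : Equiv.Perm (L ≃ₐ[K] L))⁻¹ g)) := by
  rw [lNActLinearMap, LinearMap.range_comp_of_range_eq_top _ (LinearEquiv.range _),
    Finsupp.range_linearCombination]

theorem lNAct_single (η : N) (c : L) (f : (L ≃ₐ[K] L) → L) :
    lNAct K L N (MonoidAlgebra.single η c) f
      = c • fun g => f ((η : Equiv.Perm (L ≃ₐ[K] L))⁻¹ g) := by
  rw [← lNActLinearMap_apply]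
  simp [lNActLinearMap]

theorem twistN_single (σ : L ≃ₐ[K] L) (η : N) (c : L) :
    twistN K L N hnorm σ (MonoidAlgebra.single η c)
      = MonoidAlgebra.single ⟨Equiv.mulLeft σ * (η : Equiv.Perm (L ≃ₐ[K] L)) *
          (Equiv.mulLeft σ)⁻¹, hnorm σ η η.2⟩ (σ c) := by
  rw [twistN, MonoidAlgebra.coeff_single, Finsupp.sum_single_index]
  simp

theorem twistN_add (σ : L ≃ₐ[K] L) (z w : MonoidAlgebra L N) :
    twistN K L N hnorm σ (z + w) = twistN K L N hnorm σ z + twistN K L N hnorm σ w := by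
  rw [twistN, MonoidAlgebra.coeff_add, Finsupp.sum_add_index] <;>
    simp [MonoidAlgebra.single_add, twistN]

theorem lNAct_twistN (σ : L ≃ₐ[K] L) (z : MonoidAlgebra L N) (f : (L ≃ₐ[K] L) → L) :
    lNAct K L N (twistN K L N hnorm σ z) (fun g => σ (f (σ⁻¹ * g)))
      = fun g => σ (lNAct K L N z f (σ⁻¹ * g)) := by
  simp only [← lNActLinearMap_apply]
  induction z using MonoidAlgebra.induction_linear with
  | zero => funext g; simp [twistN]
  | add z w hz hw => funext g; simp [twistN_add, hz, hw]
  | single η c =>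
    funext g
    simp [twistN_single, lNActLinearMap_apply, lNAct_single]

theorem lNAct_mem_GLfixed {z : MonoidAlgebra L N} (hz : z ∈ LNfixed K L N hnorm)
    {f : (L ≃ₐ[K] L) → L} (hf : f ∈ GLfixed K L) : lNAct K L N z f ∈ GLfixed K L := by
  intro σ
  rw [← lNAct_twistN K L N hnorm, hz σ, hf σ]

theorem mem_LNfixed_of_lNAct_mem_GLfixed {f : (L ≃ₐ[K] L) → L}
    (hinj : Function.Injective (lNActLinearMap K L N f)) (hf : f ∈ GLfixed K L)
    {z : MonoidAlgebra L N} (hz : lNAct K L N z f ∈ GLfixed K L) : z ∈ LNfixed K L N hnorm := by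
  intro σ
  apply hinj
  simp only [lNActLinearMap_apply]
  calc lNAct K L N (twistN K L N hnorm σ z) f
      = lNAct K L N (twistN K L N hnorm σ z) (fun g => σ (f (σ⁻¹ * g))) := by rw [hf σ]
    _ = lNAct K L N z f := by rw [lNAct_twistN, hz σ]

end GroupAlgebraAction

theorem Subgroup.card_eq_of_regular {α : Type*} (N : Subgroup (Equiv.Perm α))
    (hreg : ∀ a b : α, ∃! η : N, (η : Equiv.Perm α) a = b) (a : α) :
    Nat.card N = Nat.card α :=
  Nat.card_eq_of_bijective (fun η : N => (η : Equiv.Perm α) a)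
    ⟨fun _ _ h => (hreg a _).unique rfl h.symm, fun b => (hreg a b).exists⟩

theorem injective_lNActLinearMap_of_surjective (K L : Type*) [Field K] [Field L] [Algebra K L]
    [FiniteDimensional K L] (N : Subgroup (Equiv.Perm (L ≃ₐ[K] L)))
    (hreg : ∀ g h : L ≃ₐ[K] L, ∃! η : N, (η : Equiv.Perm (L ≃ₐ[K] L)) g = h)
    {f : (L ≃ₐ[K] L) → L} (hsurj : Function.Surjective (lNActLinearMap K L N f)) :
    Function.Injective (lNActLinearMap K L N f) := by
  have : Finite N := Nat.finite_of_card_ne_zero <| by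
    rw [N.card_eq_of_regular hreg 1]; exact Nat.card_pos.ne'
  have hdim : Module.finrank L (MonoidAlgebra L N) = Module.finrank L ((L ≃ₐ[K] L) → L) := by
    rw [Module.finrank_eq_nat_card_basis (MonoidAlgebra.basis N L),
      Module.finrank_fintype_fun_eq_card, ← Nat.card_eq_fintype_card,
      N.card_eq_of_regular hreg 1]
  exact (LinearMap.injective_iff_surjective_of_finrank_eq_finrank hdim).mpr hsurj

theorem fixed_generator_iff_generator_general
    (K L : Type*) [Field K] [Field L] [Algebra K L]
    [FiniteDimensional K L]
    (N : Subgroup (Equiv.Perm (L ≃ₐ[K] L)))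
    (hreg : ∀ g h : L ≃ₐ[K] L, ∃! η : N, (η : Equiv.Perm (L ≃ₐ[K] L)) g = h)
    (hnorm : ∀ (σ : L ≃ₐ[K] L), ∀ η ∈ N,
      Equiv.mulLeft σ * η * (Equiv.mulLeft σ)⁻¹ ∈ N)
    (x : L) :
    (Submodule.span K
        {w : (L ≃ₐ[K] L) → L |
          ∃ h ∈ LNfixed K L N hnorm, w = lNAct K L N h (fEl K L x)} :
        Set ((L ≃ₐ[K] L) → L)) = GLfixed K L ↔
      Submodule.span L
        {w : (L ≃ₐ[K] L) → L |
          ∃ η : N, w = fun g => fEl K L x ((η : Equiv.Perm (L ≃ₐ[K] L))⁻¹ g)} = ⊤ := by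
  have hrange : LinearMap.range (lNActLinearMap K L N (fEl K L x)) = Submodule.span L
      {w | ∃ η : N, w = fun g => fEl K L x ((η : Equiv.Perm (L ≃ₐ[K] L))⁻¹ g)} := by
    rw [range_lNActLinearMap]
    simp only [Set.range, eq_comm]
  rw [← hrange]
  constructor
  · intro hfixed
    rw [eq_top_iff, ← span_range_fEl K L, Submodule.span_le]
    rintro _ ⟨y, rfl⟩
    have hy : fEl K L y ∈ Submodule.span K _ := hfixed ▸ fEl_mem_GLfixed K L y
    refine Submodule.span_le (p := (LinearMap.range _).restrictScalars K) |>.mpr ?_ hy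
    rintro _ ⟨z, -, rfl⟩
    exact ⟨z, lNActLinearMap_apply K L N _ z⟩
  · intro hgen
    have hsurj := LinearMap.range_eq_top.mp hgen
    have hinj := injective_lNActLinearMap_of_surjective K L N hreg hsurj
    refine Set.Subset.antisymm (Submodule.span_le (p := glFixedSubmodule K L) |>.mpr ?_) ?_
    · rintro _ ⟨z, hz, rfl⟩
      exact lNAct_mem_GLfixed K L N hnorm hz (fEl_mem_GLfixed K L x)
    · intro f hf
      obtain ⟨z, rfl⟩ := hsurj f
      rw [lNActLinearMap_apply] at hf ⊢
      exact Submodule.subset_span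
        ⟨z, mem_LNfixed_of_lNAct_mem_GLfixed K L N hnorm hinj (fEl_mem_GLfixed K L x) hf, rfl⟩

/-- For a regular subgroup `N ≤ Perm G` normalized by `λ(G)` and `x ∈ L`,
the element `f_x` generates `(GL)^G` over `L[N]^G` (i.e. the `K`-span of
`{h · f_x : h ∈ L[N]^G}` equals `(GL)^G`) iff `f_x` generates `GL` over `L[N]`
(i.e. the `L`-span of `{η · f_x : η ∈ N}` equals `GL`). -/
theorem fixed_generator_iff_generator
    (K L : Type*) [Field K] [Field L] [Algebra K L]
    [FiniteDimensional K L] [IsGalois K L]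
    (N : Subgroup (Equiv.Perm (L ≃ₐ[K] L)))
    (hreg : ∀ g h : L ≃ₐ[K] L, ∃! η : N, (η : Equiv.Perm (L ≃ₐ[K] L)) g = h)
    (hnorm : ∀ (σ : L ≃ₐ[K] L), ∀ η ∈ N,
      Equiv.mulLeft σ * η * (Equiv.mulLeft σ)⁻¹ ∈ N)
    (x : L) :
    (Submodule.span K
        {w : (L ≃ₐ[K] L) → L |
          ∃ h ∈ LNfixed K L N hnorm, w = lNAct K L N h (fEl K L x)} :
        Set ((L ≃ₐ[K] L) → L)) = GLfixed K L ↔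
      Submodule.span L
        {w : (L ≃ₐ[K] L) → L |
          ∃ η : N, w = fun g => fEl K L x ((η : Equiv.Perm (L ≃ₐ[K] L))⁻¹ g)} = ⊤ :=
  fixed_generator_iff_generator_general K L N hreg hnorm x
end

section
/- For x ∈ L, the element f_x = ∑_{g∈G} g(x) u_g generates GL as a module over L[N] if and only if the square matrix T_N(x), with rows indexed by η ∈ N, columns indexed by g ∈ G, and (η,g) entry the element (η(g))(x) of L (the Galois automorphism η(g) ∈ G applied to x), is nonsingular. -/
open scoped Classical

/-!
The `L[N]`-translates `η⁻¹ · f_x = (g ↦ (η g)(x))` of `f_x` are exactly the rows of `T_N(x)`,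
so `f_x` generates `GL = L^G` iff these rows span `L^G`; for a square matrix over a field this
is nonsingularity. Regularity of `N` makes `η ↦ η(1)` a bijection `N ≃ G`, so `T_N(x)` is
square, and reindexing its rows along any bijection does not change the set of rows.
-/

theorem Matrix.span_range_row_eq_top_iff_det_ne_zero {m K : Type*} [Fintype m] [DecidableEq m]
    [Field K] (M : Matrix m m K) :
    Submodule.span K (Set.range M.row) = ⊤ ↔ M.det ≠ 0 := by
  rw [← range_vecMulLinear, LinearMap.range_eq_top, coe_vecMulLinear, vecMul_surjective_iff_isUnit,
    isUnit_iff_isUnit_det, isUnit_iff_ne_zero]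

theorem Subgroup.nonempty_equiv_of_existsUnique_apply_eq {α : Type*}
    (N : Subgroup (Equiv.Perm α)) (a : α) (h : ∀ b, ∃! η : N, (η : Equiv.Perm α) a = b) :
    Nonempty (N ≃ α) :=
  ⟨Equiv.ofBijective _ ((Function.bijective_iff_existsUnique _).2 h)⟩

section

variable (K L : Type*) [Field K] [Field L] [Algebra K L]
  (N : Subgroup (Equiv.Perm (L ≃ₐ[K] L)))

theorem setOf_translates_fEl_eq_range (x : L) :
    {w : (L ≃ₐ[K] L) → L |
        ∃ η : N, w = fun g => fEl K L x ((η : Equiv.Perm (L ≃ₐ[K] L))⁻¹ g)} =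
      Set.range fun (η : N) g => (η : Equiv.Perm (L ≃ₐ[K] L)) g x := by
  rw [← (Equiv.inv N).surjective.range_comp]
  ext w
  simp [eq_comm, fEl]

theorem range_row_reindex_eq_range (x : L) (e : N ≃ (L ≃ₐ[K] L)) :
    Set.range (Matrix.of fun r g : L ≃ₐ[K] L =>
        ((e.symm r : Equiv.Perm (L ≃ₐ[K] L)) g) x).row =
      Set.range fun (η : N) g => (η : Equiv.Perm (L ≃ₐ[K] L)) g x :=
  e.symm.surjective.range_comp fun (η : N) g => (η : Equiv.Perm (L ≃ₐ[K] L)) g x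

end

theorem generator_iff_TN_matrix_nonsingular_general
    (K L : Type*) [Field K] [Field L] [Algebra K L]
    [FiniteDimensional K L]
    (N : Subgroup (Equiv.Perm (L ≃ₐ[K] L)))
    (hreg : ∀ g h : L ≃ₐ[K] L, ∃! η : N, (η : Equiv.Perm (L ≃ₐ[K] L)) g = h)
    (x : L) :
    Submodule.span L
        {w : (L ≃ₐ[K] L) → L |
          ∃ η : N, w = fun g => fEl K L x ((η : Equiv.Perm (L ≃ₐ[K] L))⁻¹ g)} = ⊤ ↔
      ∃ e : N ≃ (L ≃ₐ[K] L),
        (Matrix.of fun r g : L ≃ₐ[K] L =>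
          ((e.symm r : Equiv.Perm (L ≃ₐ[K] L)) g) x).det ≠ 0 := by
  have : Nonempty (N ≃ (L ≃ₐ[K] L)) := N.nonempty_equiv_of_existsUnique_apply_eq 1 (hreg 1)
  simp_rw [← Matrix.span_range_row_eq_top_iff_det_ne_zero, range_row_reindex_eq_range,
    setOf_translates_fEl_eq_range, exists_const]

/-- For a regular subgroup `N ≤ Perm G` normalized by `λ(G)` and `x ∈ L`,
the element `f_x` generates `GL` over `L[N]` iff the square matrix `T_N(x)` with rows
indexed by `η ∈ N`, columns indexed by `g ∈ G`, and `(η, g)` entry `(η(g))(x)` is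
nonsingular (the matrix being squared up via a bijection `N ≃ G`, which exists by
regularity of `N`). -/
theorem generator_iff_TN_matrix_nonsingular
    (K L : Type*) [Field K] [Field L] [Algebra K L]
    [FiniteDimensional K L] [IsGalois K L]
    (N : Subgroup (Equiv.Perm (L ≃ₐ[K] L)))
    (hreg : ∀ g h : L ≃ₐ[K] L, ∃! η : N, (η : Equiv.Perm (L ≃ₐ[K] L)) g = h)
    (hnorm : ∀ (σ : L ≃ₐ[K] L), ∀ η ∈ N,
      Equiv.mulLeft σ * η * (Equiv.mulLeft σ)⁻¹ ∈ N)
    (x : L) :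
    Submodule.span L
        {w : (L ≃ₐ[K] L) → L |
          ∃ η : N, w = fun g => fEl K L x ((η : Equiv.Perm (L ≃ₐ[K] L))⁻¹ g)} = ⊤ ↔
      ∃ e : N ≃ (L ≃ₐ[K] L),
        (Matrix.of fun r g : L ≃ₐ[K] L =>
          ((e.symm r : Equiv.Perm (L ≃ₐ[K] L)) g) x).det ≠ 0 :=
  generator_iff_TN_matrix_nonsingular_general K L N hreg x
end

section
/- For every h ∈ H_λ, every z ∈ K[G], and every t ∈ L, one has h·(z•t) = z•(h·t); that is, the action of the Hopf algebra H_λ on L commutes with the action of the group algebra K[G] on L. -/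
/- `H_λ` commutes with `G` on `L` because `lAct (σ ∗ z) (σ t) = σ (lAct z t)` for every `z ∈ L[G]`:
the twist conjugates each `τ⁻¹` by `σ` and moves the coefficients through `σ`. Since the action of
`H_λ` is moreover `K`-linear, it commutes with every `K`-linear combination of elements of `G`. -/

section

variable {K L : Type*} [Field K] [Field L] [Algebra K L]

lemma kAct_map_of_forall_map_algEquiv (f : L →ₗ[K] L) (hf : ∀ (σ : L ≃ₐ[K] L) x, f (σ x) = σ (f x))
    (z : MonoidAlgebra K (L ≃ₐ[K] L)) (t : L) : f (kAct K L z t) = kAct K L z (f t) := by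
  simp only [kAct, map_finsuppSum, map_smul, hf]

lemma lAct_add (h : MonoidAlgebra L (L ≃ₐ[K] L)) (x y : L) :
    lAct K L h (x + y) = lAct K L h x + lAct K L h y := by
  simp only [lAct, map_add, mul_add, Finsupp.sum_add]

lemma lAct_smul (h : MonoidAlgebra L (L ≃ₐ[K] L)) (c : K) (x : L) :
    lAct K L h (c • x) = c • lAct K L h x := by
  simp only [lAct, map_smul, mul_smul_comm, Finsupp.smul_sum]

noncomputable def lActLinearMap (h : MonoidAlgebra L (L ≃ₐ[K] L)) : L →ₗ[K] L where
  toFun := lAct K L h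
  map_add' := lAct_add h
  map_smul' := lAct_smul h

lemma lAct_twist_apply (σ : L ≃ₐ[K] L) (z : MonoidAlgebra L (L ≃ₐ[K] L)) (t : L) :
    lAct K L (twist K L σ z) (σ t) = σ (lAct K L z t) := by
  have conj_inv_apply (τ : L ≃ₐ[K] L) : (σ * τ * σ⁻¹)⁻¹ (σ t) = σ (τ⁻¹ t) := by
    simp only [mul_inv_rev, AlgEquiv.mul_apply, AlgEquiv.aut_inv, AlgEquiv.symm_symm,
      AlgEquiv.symm_apply_apply]
  unfold twist lAct
  simp only [MonoidAlgebra.coeff_finsuppSum, MonoidAlgebra.coeff_single]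
  rw [Finsupp.sum_sum_index (fun _ => by simp) (fun _ _ _ => add_mul _ _ _), map_finsuppSum]
  refine Finsupp.sum_congr fun τ _ => ?_
  rw [Finsupp.sum_single_index (by simp), map_mul, conj_inv_apply]

lemma lAct_algEquiv_apply_of_mem_Hlambda {h : MonoidAlgebra L (L ≃ₐ[K] L)} (hh : h ∈ Hlambda K L)
    (σ : L ≃ₐ[K] L) (t : L) : lAct K L h (σ t) = σ (lAct K L h t) := by
  rw [← lAct_twist_apply, hh σ]

end

theorem Hlambda_action_commutes_with_group_action_general
    (K L : Type*) [Field K] [Field L] [Algebra K L]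
    (h : MonoidAlgebra L (L ≃ₐ[K] L)) (hh : h ∈ Hlambda K L)
    (z : MonoidAlgebra K (L ≃ₐ[K] L)) (t : L) :
    lAct K L h (kAct K L z t) = kAct K L z (lAct K L h t) :=
  kAct_map_of_forall_map_algEquiv (lActLinearMap h) (lAct_algEquiv_apply_of_mem_Hlambda hh) z t

/-- The action of `H_λ` on `L` commutes with the action of `K[G]` on `L`. -/
theorem Hlambda_action_commutes_with_group_action
    (K L : Type*) [Field K] [Field L] [Algebra K L]
    [FiniteDimensional K L] [IsGalois K L]
    (h : MonoidAlgebra L (L ≃ₐ[K] L)) (hh : h ∈ Hlambda K L)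
    (z : MonoidAlgebra K (L ≃ₐ[K] L)) (t : L) :
    lAct K L h (kAct K L z t) = kAct K L z (lAct K L h t) :=
  Hlambda_action_commutes_with_group_action_general K L h hh z t
end

section
/- For all a, b ∈ L, the element h = ∑_{g∈G} ( ∑_{ρ∈G} ρ(a) · (g⁻¹ρ)(b) ) g of the group algebra L[G] is fixed under the twisted G-action, i.e. σ∗h = h for every σ ∈ G, and hence h ∈ H_λ = L[G]^G. -/
section twist

variable {K L : Type*} [Field K] [Field L] [Algebra K L]

theorem twist_single (σ g : L ≃ₐ[K] L) (c : L) :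
    twist K L σ (MonoidAlgebra.single g c) = MonoidAlgebra.single (σ * g * σ⁻¹) (σ c) := by
  rw [twist, MonoidAlgebra.coeff_single, Finsupp.sum_single_index (by simp)]

theorem twist_add (σ : L ≃ₐ[K] L) (x y : MonoidAlgebra L (L ≃ₐ[K] L)) :
    twist K L σ (x + y) = twist K L σ x + twist K L σ y := by
  classical
  rw [twist, MonoidAlgebra.coeff_add, Finsupp.sum_add_index' (by simp)]
  · rfl
  · intro g c d
    rw [map_add, ← MonoidAlgebra.single_add]

noncomputable def twistAddHom (σ : L ≃ₐ[K] L) :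
    MonoidAlgebra L (L ≃ₐ[K] L) →+ MonoidAlgebra L (L ≃ₐ[K] L) where
  toFun := twist K L σ
  map_zero' := by simp [twist]
  map_add' := twist_add σ

theorem twist_sum (σ : L ≃ₐ[K] L) {ι : Type*} (s : Finset ι)
    (f : ι → MonoidAlgebra L (L ≃ₐ[K] L)) :
    twist K L σ (∑ i ∈ s, f i) = ∑ i ∈ s, twist K L σ (f i) :=
  map_sum (twistAddHom σ) f s

variable [Fintype (L ≃ₐ[K] L)]

theorem twist_sum_single_of_apply_eq (σ : L ≃ₐ[K] L) (c : (L ≃ₐ[K] L) → L)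
    (hc : ∀ g, σ (c g) = c (σ * g * σ⁻¹)) :
    twist K L σ (∑ g, MonoidAlgebra.single g (c g)) = ∑ g, MonoidAlgebra.single g (c g) := by
  simp only [twist_sum, twist_single, hc]
  exact Fintype.sum_equiv (MulAut.conj σ).toEquiv _ _ fun g => rfl

-- Substituting `ρ ↦ σ⁻¹ρ` turns `σ g⁻¹ ρ` into `(σ g σ⁻¹)⁻¹ ρ`.
theorem apply_sum_apply_mul_inv_mul_apply (σ g : L ≃ₐ[K] L) (a b : L) :
    σ (∑ ρ : L ≃ₐ[K] L, ρ a * (g⁻¹ * ρ) b) =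
      ∑ ρ : L ≃ₐ[K] L, ρ a * ((σ * g * σ⁻¹)⁻¹ * ρ) b := by
  rw [map_sum]
  refine Fintype.sum_equiv (Equiv.mulLeft σ) _ _ fun ρ => ?_
  have hconj : (σ * g * σ⁻¹)⁻¹ * (σ * ρ) = σ * (g⁻¹ * ρ) := by group
  rw [map_mul, Equiv.coe_mulLeft, hconj]
  rfl

end twist

theorem sum_element_mem_Hlambda_general
    (K L : Type*) [Field K] [Field L] [Algebra K L]
    [FiniteDimensional K L] (a b : L) :
    (∀ σ : L ≃ₐ[K] L,
        twist K L σ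
            (∑ g : L ≃ₐ[K] L,
              MonoidAlgebra.single g (∑ ρ : L ≃ₐ[K] L, ρ a * (g⁻¹ * ρ) b)) =
          ∑ g : L ≃ₐ[K] L,
            MonoidAlgebra.single g (∑ ρ : L ≃ₐ[K] L, ρ a * (g⁻¹ * ρ) b)) ∧
      (∑ g : L ≃ₐ[K] L,
          MonoidAlgebra.single g (∑ ρ : L ≃ₐ[K] L, ρ a * (g⁻¹ * ρ) b)) ∈ Hlambda K L := by
  have hfixed : (∑ g : L ≃ₐ[K] L,
      MonoidAlgebra.single g (∑ ρ : L ≃ₐ[K] L, ρ a * (g⁻¹ * ρ) b)) ∈ Hlambda K L := fun σ =>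
    twist_sum_single_of_apply_eq σ _ fun g => apply_sum_apply_mul_inv_mul_apply σ g a b
  exact ⟨hfixed, hfixed⟩

/-- For all `a, b ∈ L`, the element
`h = ∑_{g ∈ G} (∑_{ρ ∈ G} ρ(a) (g⁻¹ρ)(b)) g` of `L[G]` is fixed under the twisted
`G`-action, and hence lies in `H_λ = L[G]^G`. -/
theorem sum_element_mem_Hlambda
    (K L : Type*) [Field K] [Field L] [Algebra K L]
    [FiniteDimensional K L] [IsGalois K L] (a b : L) :
    (∀ σ : L ≃ₐ[K] L,
        twist K L σ
            (∑ g : L ≃ₐ[K] L,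
              MonoidAlgebra.single g (∑ ρ : L ≃ₐ[K] L, ρ a * (g⁻¹ * ρ) b)) =
          ∑ g : L ≃ₐ[K] L,
            MonoidAlgebra.single g (∑ ρ : L ≃ₐ[K] L, ρ a * (g⁻¹ * ρ) b)) ∧
      (∑ g : L ≃ₐ[K] L,
          MonoidAlgebra.single g (∑ ρ : L ≃ₐ[K] L, ρ a * (g⁻¹ * ρ) b)) ∈ Hlambda K L :=
  sum_element_mem_Hlambda_general K L a b
end

section
/- Let x ∈ L be such that {σ(x) : σ ∈ G} is a K-basis of L, and let x̂ ∈ L satisfy Tr_{L/K}(x̂ · τ(x)) = δ_{1,τ} for all τ ∈ G. Then for every a ∈ L, ∑_{g∈G} ( ∑_{ρ∈G} ρ(a) · (g⁻¹ρ)(x̂) ) · g⁻¹(x) = a. Equivalently, the element h = ∑_{g∈G} (∑_{ρ∈G} ρ(a)(g⁻¹ρ)(x̂)) g of L[G] satisfies h·x = a under the action (∑_τ c_τ τ)·x = ∑_τ c_τ τ⁻¹(x). -/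
open scoped Classical

theorem lAct_sum_single {K L : Type*} [Field K] [Field L] [Algebra K L]
    [Fintype (L ≃ₐ[K] L)] (c : (L ≃ₐ[K] L) → L) (x : L) :
    lAct K L (∑ g, MonoidAlgebra.single g (c g)) x = ∑ g, c g * g⁻¹ x := by
  rw [lAct, MonoidAlgebra.coeff_sum]
  simp_rw [MonoidAlgebra.coeff_single]
  rw [← Finsupp.sum_finsetSum_index (fun _ => zero_mul _) (fun _ _ _ => add_mul _ _ _)]
  exact Finset.sum_congr rfl fun g _ => Finsupp.sum_single_index (zero_mul _)

section

variable {K L : Type*} [CommSemiring K] [CommSemiring L] [Algebra K L] [Fintype (L ≃ₐ[K] L)]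

theorem AlgEquiv.sum_apply_inv (y : L) : ∑ g : L ≃ₐ[K] L, g⁻¹ y = ∑ g : L ≃ₐ[K] L, g y :=
  Fintype.sum_equiv (Equiv.inv _) _ _ fun _ => rfl

theorem AlgEquiv.sum_apply_mul_apply (σ : L ≃ₐ[K] L) (y : L) :
    ∑ g : L ≃ₐ[K] L, (g * σ) y = ∑ g : L ≃ₐ[K] L, g y :=
  Fintype.sum_equiv (Equiv.mulRight σ) _ _ fun _ => rfl

theorem sum_sum_apply_mul_inv_apply (a x y : L) :
    ∑ g : L ≃ₐ[K] L, (∑ ρ : L ≃ₐ[K] L, ρ a * (g⁻¹ * ρ) y) * g⁻¹ x =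
      ∑ ρ : L ≃ₐ[K] L, ρ a * ∑ g : L ≃ₐ[K] L, g (y * ρ⁻¹ x) := by
  have hρ (ρ : L ≃ₐ[K] L) :
      ∑ g : L ≃ₐ[K] L, g⁻¹ (ρ y * x) = ∑ g : L ≃ₐ[K] L, g (y * ρ⁻¹ x) := by
    rw [AlgEquiv.sum_apply_inv, ← AlgEquiv.sum_apply_mul_apply ρ (y * ρ⁻¹ x)]
    simp [AlgEquiv.mul_apply]
  calc ∑ g : L ≃ₐ[K] L, (∑ ρ : L ≃ₐ[K] L, ρ a * (g⁻¹ * ρ) y) * g⁻¹ x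
      = ∑ ρ : L ≃ₐ[K] L, ρ a * ∑ g : L ≃ₐ[K] L, g⁻¹ (ρ y * x) := by
        simp_rw [Finset.sum_mul, Finset.mul_sum, map_mul, AlgEquiv.mul_apply, mul_assoc]
        exact Finset.sum_comm
    _ = _ := by simp_rw [hρ]

end

theorem sum_element_acts_as_expected_general
    (K L : Type*) [Field K] [Field L] [Algebra K L]
    [FiniteDimensional K L]
    (x xhat : L)
    (hdual : ∀ τ : L ≃ₐ[K] L,
      ∑ g : L ≃ₐ[K] L, g (xhat * τ x) = if τ = 1 then 1 else 0) :
    ∀ a : L,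
      (∑ g : L ≃ₐ[K] L, (∑ ρ : L ≃ₐ[K] L, ρ a * (g⁻¹ * ρ) xhat) * g⁻¹ x = a) ∧
      lAct K L
          (∑ g : L ≃ₐ[K] L,
            MonoidAlgebra.single g (∑ ρ : L ≃ₐ[K] L, ρ a * (g⁻¹ * ρ) xhat)) x = a := by
  intro a
  have hsum : ∑ g : L ≃ₐ[K] L, (∑ ρ : L ≃ₐ[K] L, ρ a * (g⁻¹ * ρ) xhat) * g⁻¹ x = a := by
    simp_rw [sum_sum_apply_mul_inv_apply, hdual, inv_eq_one]
    simp
  exact ⟨hsum, (lAct_sum_single _ x).trans hsum⟩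

/-- If `{σ(x) : σ ∈ G}` is a `K`-basis of `L` and `x̂ ∈ L` satisfies
`Tr_{L/K}(x̂ · τ(x)) = δ_{1,τ}` for all `τ ∈ G`, then for every `a ∈ L` we have
`∑_{g ∈ G} (∑_{ρ ∈ G} ρ(a) (g⁻¹ρ)(x̂)) · g⁻¹(x) = a`; equivalently, the element
`h = ∑_{g ∈ G} (∑_{ρ ∈ G} ρ(a) (g⁻¹ρ)(x̂)) g` of `L[G]` satisfies `h · x = a`. -/
theorem sum_element_acts_as_expected
    (K L : Type*) [Field K] [Field L] [Algebra K L]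
    [FiniteDimensional K L] [IsGalois K L]
    (x xhat : L)
    (hbasis : ∃ b : Module.Basis (L ≃ₐ[K] L) K L, ∀ σ : L ≃ₐ[K] L, b σ = σ x)
    (hdual : ∀ τ : L ≃ₐ[K] L,
      ∑ g : L ≃ₐ[K] L, g (xhat * τ x) = if τ = 1 then 1 else 0) :
    ∀ a : L,
      (∑ g : L ≃ₐ[K] L, (∑ ρ : L ≃ₐ[K] L, ρ a * (g⁻¹ * ρ) xhat) * g⁻¹ x = a) ∧
      lAct K L
          (∑ g : L ≃ₐ[K] L,
            MonoidAlgebra.single g (∑ ρ : L ≃ₐ[K] L, ρ a * (g⁻¹ * ρ) xhat)) x = a :=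
  sum_element_acts_as_expected_general K L x xhat hdual
end
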